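/- arXiv:2504.07845 — 3 statements merged into one kernel-verified Lean document; each statement's English description precedes it below -/
import Mathlib

section
/- Let G be a tdlc group and (π, V) a smooth representation of G on a complex vector space. Then π is algebraically irreducible if and only if for every compact open subgroup K of G with V^K ≠ 0, the space V^K of K-invariant vectors is an algebraically irreducible module over the Hecke algebra H_K(G) of compactly supported K-bi-invariant functions on G. -/
open scoped ComplexInnerProductSpace

/-- A (strongly continuous) unitary representation of a topological group `G`
on a complex Hilbert space. -/
structure UnitaryRep (G : Type*) [Group G] [TopologicalSpace G] where
  /-- the underlying Hilbert space -/
  carrier : Type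
  [nacg : NormedAddCommGroup carrier]
  [ips : InnerProductSpace ℂ carrier]
  [cs : CompleteSpace carrier]
  /-- the action by unitary operators -/
  ρ : G → carrier ≃ₗᵢ[ℂ] carrier
  map_one' : ∀ w : carrier, ρ 1 w = w
  map_mul' : ∀ (g h : G) (w : carrier), ρ (g * h) w = ρ g (ρ h w)
  continuous_orbit : ∀ w : carrier, Continuous fun g => ρ g w

attribute [instance] UnitaryRep.nacg UnitaryRep.ips UnitaryRep.cs

open MeasureTheory

namespace UnitaryRep

variable {G : Type*} [Group G] [TopologicalSpace G]

/-- The matrix coefficient `g ↦ ⟪π(g)u, v⟫` of a unitary representation. -/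
noncomputable def mc (π : UnitaryRep G) (u v : π.carrier) : G → ℂ := fun g => ⟪π.ρ g u, v⟫

/-- Weak containment `π' ≺ π`: every matrix coefficient of `π'` is approximated,
uniformly on compact sets, by finite sums of matrix coefficients of `π`. -/
def WeakContained (π' π : UnitaryRep G) : Prop :=
  ∀ (u v : π'.carrier) (C : Set G), IsCompact C → ∀ ε > (0 : ℝ),
    ∃ (n : ℕ) (a b : Fin n → π.carrier),
      ∀ g ∈ C, ‖π'.mc u v g - ∑ i, π.mc (a i) (b i) g‖ ≤ ε

/-- Weak containment of a representation in a set of representations. -/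
def WeakContainedIn (π' : UnitaryRep G) (S : Set (UnitaryRep G)) : Prop :=
  ∀ (u v : π'.carrier) (C : Set G), IsCompact C → ∀ ε > (0 : ℝ),
    ∃ (n : ℕ) (σ : Fin n → UnitaryRep G), (∀ i, σ i ∈ S) ∧
      ∃ (a : (i : Fin n) → (σ i).carrier) (b : (i : Fin n) → (σ i).carrier),
        ∀ g ∈ C, ‖π'.mc u v g - ∑ i, (σ i).mc (a i) (b i) g‖ ≤ ε

/-- Topological irreducibility (together with nontriviality). -/
def IsIrreducible (π : UnitaryRep G) : Prop :=
  (∃ w : π.carrier, w ≠ 0) ∧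
    ∀ W : Submodule ℂ π.carrier, IsClosed (W : Set π.carrier) →
      (∀ g, ∀ w ∈ W, π.ρ g w ∈ W) → W = ⊥ ∨ W = ⊤

/-- The support of a unitary representation: all irreducible representations
weakly contained in it. -/
def supp (π : UnitaryRep G) : Set (UnitaryRep G) :=
  {σ | σ.IsIrreducible ∧ σ.WeakContained π}

/-- A set of irreducible representations is Fell-closed if it contains every
irreducible representation weakly contained in it. -/
def FellClosed (S : Set (UnitaryRep G)) : Prop :=
  ∀ σ : UnitaryRep G, σ.IsIrreducible → σ.WeakContainedIn S → σ ∈ S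

/-- The trivial (one-dimensional) representation. -/
noncomputable def trivialRep (G : Type*) [Group G] [TopologicalSpace G] : UnitaryRep G where
  carrier := ℂ
  ρ _ := LinearIsometryEquiv.refl ℂ ℂ
  map_one' _ := rfl
  map_mul' _ _ _ := rfl
  continuous_orbit _ := continuous_const

/-- `τ` is a realization of the Hilbertian tensor product `π₁ ⊗ π₂`. -/
def IsTensorRep (π₁ π₂ τ : UnitaryRep G) : Prop :=
  ∃ t : π₁.carrier → π₂.carrier → τ.carrier,
    (∀ u v u' v', ⟪t u v, t u' v'⟫ = ⟪u, u'⟫ * ⟪v, v'⟫) ∧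
    (∀ g u v, τ.ρ g (t u v) = t (π₁.ρ g u) (π₂.ρ g v)) ∧
    Dense (Submodule.span ℂ {w : τ.carrier | ∃ u v, w = t u v} : Set τ.carrier)

/-- Unitary equivalence of representations. -/
def UnitaryEquiv (π σ : UnitaryRep G) : Prop :=
  ∃ e : π.carrier ≃ₗᵢ[ℂ] σ.carrier, ∀ g w, e (π.ρ g w) = σ.ρ g (e w)

/-- `πb` is a realization of the conjugate (contragredient) representation of `π`. -/
def IsConjugateRep (π πb : UnitaryRep G) : Prop :=
  ∃ c : π.carrier → πb.carrier, Function.Bijective c ∧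
    (∀ u v, c (u + v) = c u + c v) ∧
    (∀ (a : ℂ) (u : π.carrier), c (a • u) = (starRingEnd ℂ) a • c u) ∧
    (∀ u v, ⟪c u, c v⟫ = (starRingEnd ℂ) ⟪u, v⟫) ∧
    (∀ g u, πb.ρ g (c u) = c (π.ρ g u))

/-- Restriction of a representation to a subgroup. -/
noncomputable def res (π : UnitaryRep G) (Γ : Subgroup G) : UnitaryRep Γ where
  carrier := π.carrier
  ρ γ := π.ρ γ
  map_one' w := π.map_one' w
  map_mul' g h w := π.map_mul' g h w
  continuous_orbit w := (π.continuous_orbit w).comp continuous_subtype_val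

/-- Membership in `Ĝ_p`: an irreducible representation with a dense subspace of
vectors whose matrix coefficients lie in `L^{p+ε}(G)` for every `ε > 0`. -/
def MemGhat [MeasurableSpace G] (π : UnitaryRep G) (p : ℝ) (μ : Measure G) : Prop :=
  π.IsIrreducible ∧
    ∃ H₀ : Submodule ℂ π.carrier, Dense (H₀ : Set π.carrier) ∧
      ∀ u ∈ H₀, ∀ v ∈ H₀, ∀ ε > (0 : ℝ),
        MemLp (π.mc u v) (ENNReal.ofReal (p + ε)) μ

end UnitaryRep


/-- The Hecke algebra `H_K(G)` of compactly supported `K`-bi-invariant functions,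
as a set of functions. -/
def heckeSet {G : Type*} [Group G] [TopologicalSpace G] (K : Subgroup G) : Set (G → ℂ) :=
  {f | HasCompactSupport f ∧ ∀ k₁ ∈ K, ∀ k₂ ∈ K, ∀ g : G, f (k₁ * g * k₂) = f g}

/-- The submodule of `K`-invariant vectors of a (not necessarily topological)
representation. -/
def fixedSub {G V : Type*} [Group G] [AddCommGroup V] [Module ℂ V]
    (π : G →* (V →ₗ[ℂ] V)) (K : Subgroup G) : Submodule ℂ V where
  carrier := {v | ∀ k ∈ K, π k v = v}
  add_mem' := by
    intro a b ha hb k hk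
    simp [map_add, ha k hk, hb k hk]
  zero_mem' := by
    intro k hk
    simp
  smul_mem' := by
    intro c v hv k hk
    simp [_root_.map_smul, hv k hk]

/-- The action of a compactly supported `K`-bi-invariant function on a `K`-invariant
vector, as a finite sum over the cosets `G ⧸ K` (normalized Haar measure giving `K`
mass one). -/
noncomputable def heckeAct {G V : Type*} [Group G] [AddCommGroup V] [Module ℂ V]
    (π : G →* (V →ₗ[ℂ] V)) (K : Subgroup G) (f : G → ℂ) (v : V) : V :=
  ∑ᶠ c : G ⧸ K, f (Quotient.out c) • π (Quotient.out c) v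

/-!
For `w ∈ V^K` the cosets contained in `KgK` form the `K`-orbit of `gK`, so the Hecke operator of
`1_{KgK}` sends `w` to a nonzero multiple of `e_K π(g) w`, where `e_K` is the averaging projection
onto `V^K` (on a smooth vector, an average over the finite quotient of `K` by its stabilizer).
Hence if `W ⊆ V^K` is Hecke-stable and contains `w ≠ 0`, the `G`-stable subspace
`{u | ∀ g, e_K π(g) u ∈ W}` contains `w`; by irreducibility it is all of `V`, and
`V^K = e_K V ⊆ W`. Conversely, by van Dantzig a nonzero vector `w` of a `G`-stable `W` and any
`v` are fixed by a common compact open `K`; then `W ∩ V^K` is a nonzero Hecke-stable subspace of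
`V^K`, hence all of `V^K`, and `v ∈ W`.
-/

open MulAction
open DoubleCoset (doubleCoset mem_doubleCoset)

section Averaging

variable {H V : Type*} [Group H] [AddCommGroup V] [Module ℂ V] (ρ : H →* (V →ₗ[ℂ] V))

theorem finsum_comp_quotientMapOfLE {M : Type*} [AddCommMonoid M] {s t : Subgroup H}
    [s.FiniteIndex] (hst : s ≤ t) (F : H ⧸ t → M) :
    ∑ᶠ c : H ⧸ s, F (Subgroup.quotientMapOfLE hst c) = s.relIndex t • ∑ᶠ d : H ⧸ t, F d := by
  have : t.FiniteIndex := Subgroup.finiteIndex_of_le hst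
  have := Fintype.ofFinite (H ⧸ t)
  have := Fintype.ofFinite (t ⧸ s.subgroupOf t)
  rw [← finsum_comp_equiv (Subgroup.quotientEquivProdOfLE hst).symm]
  have hfst : ∀ p,
      Subgroup.quotientMapOfLE hst ((Subgroup.quotientEquivProdOfLE hst).symm p) = p.1 :=
    fun p => congrArg Prod.fst ((Subgroup.quotientEquivProdOfLE hst).apply_symm_apply p)
  simp only [hfst, finsum_eq_sum_of_fintype, Fintype.sum_prod_type, Finset.sum_const,
    Finset.card_univ, Finset.smul_sum]
  rw [Subgroup.relIndex, Subgroup.index, Nat.card_eq_fintype_card]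

theorem apply_out_of_mem_fixedSub {s : Subgroup H} {v : V} (hv : v ∈ fixedSub ρ s) (x : H) :
    ρ (x : H ⧸ s).out v = ρ x v := by
  obtain ⟨h, hx⟩ := QuotientGroup.mk_out_eq_mul s x
  rw [hx, map_mul, Module.End.mul_apply, hv h h.2]

noncomputable def cosetSum (s : Subgroup H) : V →ₗ[ℂ] V := ∑ᶠ c : H ⧸ s, ρ c.out

theorem cosetSum_apply (s : Subgroup H) [s.FiniteIndex] (v : V) :
    cosetSum ρ s v = ∑ᶠ c : H ⧸ s, ρ c.out v :=
  map_finsum (LinearMap.applyₗ v) (Set.toFinite _)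

theorem cosetSum_of_le {s t : Subgroup H} [s.FiniteIndex] (hst : s ≤ t) {v : V}
    (hv : v ∈ fixedSub ρ t) : cosetSum ρ s v = s.relIndex t • cosetSum ρ t v := by
  have : t.FiniteIndex := Subgroup.finiteIndex_of_le hst
  have hterm : ∀ c : H ⧸ s, ρ c.out v = ρ (Subgroup.quotientMapOfLE hst c).out v := by
    intro c
    refine QuotientGroup.induction_on c fun x => ?_
    rw [apply_out_of_mem_fixedSub ρ (fun h hh => hv h (hst hh)), Subgroup.quotientMapOfLE_apply_mk,
      apply_out_of_mem_fixedSub ρ hv]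
  rw [cosetSum_apply, cosetSum_apply, finsum_congr hterm, finsum_comp_quotientMapOfLE hst
    (fun d => ρ d.out v)]

noncomputable def cosetAverage (s : Subgroup H) : V →ₗ[ℂ] V := (s.index : ℂ)⁻¹ • cosetSum ρ s

theorem cosetAverage_of_le {s t : Subgroup H} [s.FiniteIndex] (hst : s ≤ t) {v : V}
    (hv : v ∈ fixedSub ρ t) : cosetAverage ρ s v = cosetAverage ρ t v := by
  have : t.FiniteIndex := Subgroup.finiteIndex_of_le hst
  have hrel : (s.relIndex t : ℂ) ≠ 0 := Nat.cast_ne_zero.mpr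
    (Subgroup.isFiniteRelIndex_of_finiteIndex (K := t)).relIndex_ne_zero
  simp only [cosetAverage, LinearMap.smul_apply, cosetSum_of_le ρ hst hv,
    ← Subgroup.relIndex_mul_index hst, Nat.cast_mul, ← Nat.cast_smul_eq_nsmul ℂ, smul_smul, mul_inv]
  rw [mul_right_comm, inv_mul_cancel₀ hrel, one_mul]

theorem cosetAverage_top {v : V} (hv : v ∈ fixedSub ρ ⊤) : cosetAverage ρ ⊤ v = v := by
  have := QuotientGroup.subsingleton_quotient_top (G := H)
  have : Unique (H ⧸ (⊤ : Subgroup H)) := uniqueOfSubsingleton (1 : H)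
  rw [cosetAverage, LinearMap.smul_apply, cosetSum_apply, finsum_unique, hv _ trivial,
    Subgroup.index_top, Nat.cast_one, inv_one, one_smul]

def vectorStabilizer (v : V) : Subgroup H where
  carrier := {h | ρ h v = v}
  mul_mem' {a b} ha hb := by
    simp only [Set.mem_ofPred_eq, map_mul, Module.End.mul_apply] at *
    rw [hb, ha]
  one_mem' := by simp
  inv_mem' {a} ha := by
    simp only [Set.mem_ofPred_eq] at *
    conv_lhs => rw [← ha, ← Module.End.mul_apply, ← map_mul, inv_mul_cancel, map_one]
    rfl

theorem mem_fixedSub_iff_le_vectorStabilizer {s : Subgroup H} {v : V} :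
    v ∈ fixedSub ρ s ↔ s ≤ vectorStabilizer ρ v :=
  Iff.rfl

theorem cosetAverage_vectorStabilizer {s : Subgroup H} [s.FiniteIndex] {v : V}
    (hv : v ∈ fixedSub ρ s) :
    cosetAverage ρ (vectorStabilizer ρ v) v = cosetAverage ρ s v :=
  (cosetAverage_of_le ρ ((mem_fixedSub_iff_le_vectorStabilizer ρ).mp hv)
    ((mem_fixedSub_iff_le_vectorStabilizer ρ).mpr le_rfl)).symm

noncomputable def invariantsProjection (hρ : ∀ v, (vectorStabilizer ρ v).FiniteIndex) :
    V →ₗ[ℂ] V where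
  toFun v := cosetAverage ρ (vectorStabilizer ρ v) v
  map_add' u v := by
    have hu : u ∈ fixedSub ρ (vectorStabilizer ρ u ⊓ vectorStabilizer ρ v) := fun _ h => h.1
    have hv : v ∈ fixedSub ρ (vectorStabilizer ρ u ⊓ vectorStabilizer ρ v) := fun _ h => h.2
    have := hρ u; have := hρ v
    rw [cosetAverage_vectorStabilizer ρ hu, cosetAverage_vectorStabilizer ρ hv,
      cosetAverage_vectorStabilizer ρ (add_mem hu hv), map_add]
  map_smul' a v := by
    have hv : v ∈ fixedSub ρ (vectorStabilizer ρ v) := fun _ h => h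
    have := hρ v
    rw [cosetAverage_vectorStabilizer ρ (Submodule.smul_mem _ a hv), map_smul, RingHom.id_apply]

theorem invariantsProjection_apply {hρ : ∀ v, (vectorStabilizer ρ v).FiniteIndex}
    {s : Subgroup H} [s.FiniteIndex] {v : V} (hv : v ∈ fixedSub ρ s) :
    invariantsProjection ρ hρ v = cosetAverage ρ s v := by
  rw [invariantsProjection, LinearMap.coe_mk, AddHom.coe_mk]
  exact cosetAverage_vectorStabilizer ρ hv

theorem invariantsProjection_of_mem {hρ : ∀ v, (vectorStabilizer ρ v).FiniteIndex} {v : V}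
    (hv : v ∈ fixedSub ρ ⊤) : invariantsProjection ρ hρ v = v := by
  rw [invariantsProjection_apply ρ hv, cosetAverage_top ρ hv]

end Averaging

section Hecke

variable {G V : Type*} [Group G] [AddCommGroup V] [Module ℂ V] (π : G →* (V →ₗ[ℂ] V))

theorem heckeAct_mem_of_forall_mem {K : Subgroup G} {W : Submodule ℂ V}
    (hW : ∀ g : G, ∀ v ∈ W, π g v ∈ W) (f : G → ℂ) {v : V} (hv : v ∈ W) :
    heckeAct π K f v ∈ W :=
  finsum_induction (· ∈ W) W.zero_mem (fun _ _ => W.add_mem) fun _ => W.smul_mem _ (hW _ _ hv)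

theorem heckeAct_mem_fixedSub {K : Subgroup G} {f : G → ℂ}
    (hf : ∀ k₁ ∈ K, ∀ k₂ ∈ K, ∀ g : G, f (k₁ * g * k₂) = f g) {v : V} (hv : v ∈ fixedSub π K) :
    heckeAct π K f v ∈ fixedSub π K := by
  intro k hk
  have hf_out : ∀ x : G, f (x : G ⧸ K).out = f x := fun x => by
    obtain ⟨κ, hκ⟩ := QuotientGroup.mk_out_eq_mul K x
    rw [hκ, ← hf 1 K.one_mem κ κ.2 x, one_mul]
  have hterm : ∀ c : G ⧸ K,
      π k (f c.out • π c.out v) = f (k • c).out • π (k • c).out v := by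
    refine fun c => QuotientGroup.induction_on c fun x => ?_
    rw [MulAction.Quotient.smul_coe, smul_eq_mul, hf_out, hf_out, apply_out_of_mem_fixedSub π hv,
      apply_out_of_mem_fixedSub π hv, map_smul, ← Module.End.mul_apply, ← map_mul]
    congr 1
    simpa using (hf k hk 1 K.one_mem x).symm
  have hinj : Function.Injective (π k) :=
    ((Module.End.isUnit_iff _).mp ((Group.isUnit k).map π)).injective
  exact ((π k).toAddMonoidHom.map_finsum_of_injective hinj _).trans
    ((finsum_congr hterm).trans (finsum_comp_equiv (MulAction.toPerm k : Equiv.Perm (G ⧸ K))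
      (f := fun c : G ⧸ K => f c.out • π c.out v)))

theorem mk_mem_orbit_iff_mem_doubleCoset {K : Subgroup G} {g x : G} :
    (x : G ⧸ K) ∈ orbit K (g : G ⧸ K) ↔ x ∈ doubleCoset g K K := by
  rw [mem_doubleCoset]
  constructor
  · rintro ⟨k, hk⟩
    have hk : (((k : G) * g : G) : G ⧸ K) = x := hk
    rw [QuotientGroup.eq] at hk
    exact ⟨k, k.2, _, hk, (mul_inv_cancel_left _ _).symm⟩
  · rintro ⟨k₁, hk₁, k₂, hk₂, rfl⟩
    exact ⟨⟨k₁, hk₁⟩, (QuotientGroup.mk_mul_of_mem (k₁ * g) hk₂).symm⟩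

theorem heckeAct_indicator_doubleCoset {K : Subgroup G} (g : G)
    [(stabilizer K (g : G ⧸ K)).FiniteIndex] {w : V} (hw : w ∈ fixedSub π K) :
    heckeAct π K ((doubleCoset g K K).indicator (1 : G → ℂ)) w =
      cosetSum (π.comp K.subtype) (stabilizer K (g : G ⧸ K)) (π g w) := by
  have hterm : ∀ c : G ⧸ K, (doubleCoset g K K).indicator (1 : G → ℂ) c.out • π c.out w =
      (orbit K (g : G ⧸ K)).indicator (fun c => π c.out w) c := by
    intro c
    have hmem : c.out ∈ doubleCoset g K K ↔ c ∈ orbit K (g : G ⧸ K) := by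
      rw [← mk_mem_orbit_iff_mem_doubleCoset, QuotientGroup.out_eq']
    by_cases hc : c ∈ orbit K (g : G ⧸ K)
    · rw [Set.indicator_of_mem (hmem.mpr hc), Set.indicator_of_mem hc, Pi.one_apply, one_smul]
    · rw [Set.indicator_of_notMem (mt hmem.mp hc), Set.indicator_of_notMem hc, zero_smul]
  rw [heckeAct, finsum_congr hterm, ← finsum_mem_def, ← finsum_set_coe_eq_finsum_mem,
    ← finsum_comp_equiv (orbitEquivQuotientStabilizer K (g : G ⧸ K)).symm, cosetSum_apply]
  refine finsum_congr fun q => ?_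
  conv_lhs => rw [← QuotientGroup.out_eq' q]
  rw [orbitEquivQuotientStabilizer_symm_apply]
  change π (((q.out * g : G) : G ⧸ K)).out w = _
  rw [apply_out_of_mem_fixedSub π hw, map_mul]
  rfl

end Hecke

section VanDantzig

open scoped Pointwise

variable {G : Type*} [Group G] [TopologicalSpace G] [IsTopologicalGroup G]

theorem exists_isOpen_isCompact_subgroup_subset [LocallyCompactSpace G]
    [TotallyDisconnectedSpace G] {O : Set G} (hO : IsOpen O) (h1 : (1 : G) ∈ O) :
    ∃ K : Subgroup G, IsOpen (K : Set G) ∧ IsCompact (K : Set G) ∧ (K : Set G) ⊆ O := by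
  obtain ⟨s, hs, h1s, hsO⟩ := exists_compact_subset hO h1
  obtain ⟨V, hV, h1V, hVs⟩ :=
    loc_compact_Haus_tot_disc_of_zero_dim.mem_nhds_iff.mp (isOpen_interior.mem_nhds h1s)
  have hVc : IsCompact V := hs.of_isClosed_subset hV.isClosed (hVs.trans interior_subset)
  obtain ⟨U, hU, hUV⟩ := compact_open_separated_mul_left hVc hV.isOpen subset_rfl
  have hsmul : ∀ g ∈ U, g • V ⊆ V := fun g hg =>
    (Set.smul_set_subset_smul hg).trans hUV
  let K : Subgroup G := stabilizer G V
  have hUK : U ∩ U⁻¹ ⊆ K := fun g hg =>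
    (hsmul g hg.1).antisymm (Set.subset_smul_set_iff.mpr (hsmul g⁻¹ hg.2))
  have hKo : IsOpen (K : Set G) :=
    K.isOpen_of_mem_nhds (Filter.mem_of_superset (Filter.inter_mem hU (inv_mem_nhds_one G hU)) hUK)
  have hKV : (K : Set G) ⊆ V := fun g (hg : g • V = V) => by
    have hg1 := Set.smul_mem_smul_set (a := g) h1V
    rwa [hg, smul_eq_mul, mul_one] at hg1
  exact ⟨K, hKo, hVc.of_isClosed_subset (K.isClosed_of_isOpen hKo) hKV,
    fun g hg => hsO (interior_subset (hVs (hKV hg)))⟩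

end VanDantzig

theorem Subgroup.finiteIndex_of_isOpen {H : Type*} [Group H] [TopologicalSpace H]
    [SeparatelyContinuousMul H] [CompactSpace H] (s : Subgroup H) (hs : IsOpen (s : Set H)) :
    s.FiniteIndex :=
  have := s.quotient_finite_of_isOpen hs
  Subgroup.finiteIndex_of_finite_quotient

section Topological

variable {G V : Type*} [Group G] [TopologicalSpace G] [IsTopologicalGroup G]
  [AddCommGroup V] [Module ℂ V] (π : G →* (V →ₗ[ℂ] V)) {K : Subgroup G}

theorem finiteIndex_vectorStabilizer (hKc : IsCompact (K : Set G))
    (hsmooth : ∀ v : V, IsOpen {g : G | π g v = v}) (v : V) :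
    (vectorStabilizer (π.comp K.subtype) v).FiniteIndex :=
  have := isCompact_iff_compactSpace.mp hKc
  Subgroup.finiteIndex_of_isOpen _ ((hsmooth v).preimage continuous_subtype_val)

theorem finiteIndex_stabilizer_coset (hKo : IsOpen (K : Set G)) (hKc : IsCompact (K : Set G))
    (g : G) : (stabilizer K (g : G ⧸ K)).FiniteIndex :=
  have := isCompact_iff_compactSpace.mp hKc
  have := QuotientGroup.discreteTopology hKo
  have : ContinuousSMul K (G ⧸ K) := Subgroup.continuousSMul
  Subgroup.finiteIndex_of_isOpen _ (stabilizer_isOpen K (g : G ⧸ K))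

theorem indicator_doubleCoset_mem_heckeSet (hKo : IsOpen (K : Set G))
    (hKc : IsCompact (K : Set G)) (g : G) :
    (doubleCoset g K K).indicator (1 : G → ℂ) ∈ heckeSet K := by
  have hcompact : IsCompact (doubleCoset g K K) :=
    (hKc.mul isCompact_singleton).mul hKc
  have hclosed : IsClosed (doubleCoset g K K) :=
    (K.isClosed_of_isOpen hKo).mul_left_of_isCompact (hKc.mul isCompact_singleton)
  refine ⟨HasCompactSupport.intro' hcompact hclosed fun x hx => Set.indicator_of_notMem hx _,
    fun k₁ hk₁ k₂ hk₂ x => ?_⟩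
  have hmem : k₁ * x * k₂ ∈ doubleCoset g K K ↔ x ∈ doubleCoset g K K := by
    rw [← mk_mem_orbit_iff_mem_doubleCoset, ← mk_mem_orbit_iff_mem_doubleCoset,
      QuotientGroup.mk_mul_of_mem _ hk₂,
      show ((k₁ * x : G) : G ⧸ K) = (⟨k₁, hk₁⟩ : K) • (x : G ⧸ K) from rfl,
      ← orbit_eq_iff, orbit_smul, orbit_eq_iff]
  classical
  simp only [Set.indicator_apply, hmem, Pi.one_apply]

theorem invariantsProjection_apply_mem (hKo : IsOpen (K : Set G)) (hKc : IsCompact (K : Set G))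
    (hsmooth : ∀ v : V, IsOpen {g : G | π g v = v}) {W : Submodule ℂ V} (hWK : W ≤ fixedSub π K)
    (hW : ∀ f ∈ heckeSet K, ∀ v ∈ W, heckeAct π K f v ∈ W) (g : G) {w : V} (hw : w ∈ W) :
    invariantsProjection (π.comp K.subtype) (finiteIndex_vectorStabilizer π hKc hsmooth) (π g w)
      ∈ W := by
  have := finiteIndex_stabilizer_coset hKo hKc g
  have hfix : π g w ∈ fixedSub (π.comp K.subtype) (stabilizer K (g : G ⧸ K)) := by
    intro k hk
    have hk : (((k : G) * g : G) : G ⧸ K) = g := hk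
    rw [MonoidHom.comp_apply, Subgroup.subtype_apply, ← Module.End.mul_apply, ← map_mul,
      ← apply_out_of_mem_fixedSub π (hWK hw), hk, apply_out_of_mem_fixedSub π (hWK hw)]
  rw [invariantsProjection_apply _ hfix, cosetAverage, LinearMap.smul_apply,
    ← heckeAct_indicator_doubleCoset π g (hWK hw)]
  exact W.smul_mem _ (hW _ (indicator_doubleCoset_mem_heckeSet hKo hKc g) w hw)

theorem eq_fixedSub_of_heckeAct_mem (hsmooth : ∀ v : V, IsOpen {g : G | π g v = v})
    (hirr : ∀ W : Submodule ℂ V, (∀ g : G, ∀ v ∈ W, π g v ∈ W) → W = ⊥ ∨ W = ⊤)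
    (hKo : IsOpen (K : Set G)) (hKc : IsCompact (K : Set G)) {W : Submodule ℂ V}
    (hWK : W ≤ fixedSub π K) (hW : ∀ f ∈ heckeSet K, ∀ v ∈ W, heckeAct π K f v ∈ W)
    (hW0 : W ≠ ⊥) : W = fixedSub π K := by
  obtain ⟨w, hwW, hw0⟩ := (Submodule.ne_bot_iff W).mp hW0
  set P := invariantsProjection (π.comp K.subtype) (finiteIndex_vectorStabilizer π hKc hsmooth)
  let U : Submodule ℂ V := ⨅ g : G, W.comap (P ∘ₗ π g)
  have hmemU : ∀ u, u ∈ U ↔ ∀ g, P (π g u) ∈ W := by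
    simp [U, Submodule.mem_iInf]
  have hUstable : ∀ h : G, ∀ u ∈ U, π h u ∈ U := fun h u hu =>
    (hmemU _).mpr fun g => by simpa [map_mul] using (hmemU u).mp hu (g * h)
  have hwU : w ∈ U := (hmemU w).mpr fun g =>
    invariantsProjection_apply_mem π hKo hKc hsmooth hWK hW g hwW
  have hUtop : U = ⊤ :=
    (hirr U hUstable).resolve_left ((Submodule.ne_bot_iff U).mpr ⟨w, hwU, hw0⟩)
  refine le_antisymm hWK fun v hv => ?_
  have hPv := (hmemU v).mp (hUtop ▸ Submodule.mem_top) 1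
  have hvfix : v ∈ fixedSub (π.comp K.subtype) ⊤ := fun k _ => hv k k.2
  rwa [map_one, Module.End.one_apply, invariantsProjection_of_mem _ hvfix] at hPv

theorem eq_top_of_forall_heckeAct_mem [LocallyCompactSpace G] [TotallyDisconnectedSpace G]
    (hsmooth : ∀ v : V, IsOpen {g : G | π g v = v})
    (hHecke : ∀ K : Subgroup G, IsOpen (K : Set G) → IsCompact (K : Set G) →
      fixedSub π K ≠ ⊥ → ∀ W : Submodule ℂ V, W ≤ fixedSub π K →
        (∀ f ∈ heckeSet K, ∀ v ∈ W, heckeAct π K f v ∈ W) → W = ⊥ ∨ W = fixedSub π K)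
    {W : Submodule ℂ V} (hW : ∀ g : G, ∀ v ∈ W, π g v ∈ W) (hW0 : W ≠ ⊥) : W = ⊤ := by
  obtain ⟨w, hwW, hw0⟩ := (Submodule.ne_bot_iff W).mp hW0
  refine eq_top_iff.mpr fun v _ => ?_
  obtain ⟨K, hKo, hKc, hKfix⟩ := exists_isOpen_isCompact_subgroup_subset
    ((hsmooth w).inter (hsmooth v)) (by simp)
  have hw : w ∈ fixedSub π K := fun k hk => (hKfix hk).1
  have hv : v ∈ fixedSub π K := fun k hk => (hKfix hk).2
  have hWK : W ⊓ fixedSub π K ≤ fixedSub π K := inf_le_right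
  have hstable : ∀ f ∈ heckeSet K, ∀ u ∈ W ⊓ fixedSub π K, heckeAct π K f u ∈ W ⊓ fixedSub π K :=
    fun f hf u hu => ⟨heckeAct_mem_of_forall_mem π hW f hu.1, heckeAct_mem_fixedSub π hf.2 hu.2⟩
  have hne : W ⊓ fixedSub π K ≠ ⊥ := (Submodule.ne_bot_iff _).mpr ⟨w, ⟨hwW, hw⟩, hw0⟩
  have heq := (hHecke K hKo hKc (ne_bot_of_le_ne_bot hne hWK) _ hWK hstable).resolve_left hne
  exact (heq.symm ▸ hv : v ∈ W ⊓ fixedSub π K).1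

end Topological

theorem smooth_irreducible_iff_hecke_irreducible_general {G V : Type*} [Group G]
    [TopologicalSpace G] [IsTopologicalGroup G] [LocallyCompactSpace G]
    [TotallyDisconnectedSpace G] [AddCommGroup V] [Module ℂ V]
    (π : G →* (V →ₗ[ℂ] V))
    (hsmooth : ∀ v : V, IsOpen {g : G | π g v = v}) :
    (∀ W : Submodule ℂ V, (∀ g : G, ∀ v ∈ W, π g v ∈ W) → W = ⊥ ∨ W = ⊤) ↔
    (∀ K : Subgroup G, IsOpen (K : Set G) → IsCompact (K : Set G) →
      fixedSub π K ≠ ⊥ →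
      ∀ W : Submodule ℂ V, W ≤ fixedSub π K →
        (∀ f ∈ heckeSet K, ∀ v ∈ W, heckeAct π K f v ∈ W) →
        W = ⊥ ∨ W = fixedSub π K) :=
  ⟨fun hirr _ hKo hKc _ _ hWK hW =>
    or_iff_not_imp_left.mpr (eq_fixedSub_of_heckeAct_mem π hsmooth hirr hKo hKc hWK hW),
   fun hHecke _ hW => or_iff_not_imp_left.mpr (eq_top_of_forall_heckeAct_mem π hsmooth hHecke hW)⟩

/-- A smooth representation of a tdlc group is algebraically
irreducible iff for every compact open subgroup `K` with `V^K ≠ 0`, the space of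
`K`-invariant vectors is an algebraically irreducible `H_K(G)`-module. -/
theorem smooth_irreducible_iff_hecke_irreducible {G V : Type*} [Group G]
    [TopologicalSpace G] [IsTopologicalGroup G] [LocallyCompactSpace G]
    [TotallyDisconnectedSpace G] [AddCommGroup V] [Module ℂ V] [Nontrivial V]
    (π : G →* (V →ₗ[ℂ] V))
    (hsmooth : ∀ v : V, IsOpen {g : G | π g v = v}) :
    (∀ W : Submodule ℂ V, (∀ g : G, ∀ v ∈ W, π g v ∈ W) → W = ⊥ ∨ W = ⊤) ↔
    (∀ K : Subgroup G, IsOpen (K : Set G) → IsCompact (K : Set G) →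
      fixedSub π K ≠ ⊥ →
      ∀ W : Submodule ℂ V, W ≤ fixedSub π K →
        (∀ f ∈ heckeSet K, ∀ v ∈ W, heckeAct π K f v ∈ W) →
        W = ⊥ ∨ W = fixedSub π K) :=
  smooth_irreducible_iff_hecke_irreducible_general π hsmooth
end

section
/- Let G be a tdlc group and (π, H) a unitary, admissible, topologically irreducible representation of G. Then the underlying smooth representation (π, H^∞) on the space of smooth vectors is algebraically irreducible. -/
open scoped ComplexInnerProductSpace

open MeasureTheory

/-- The submodule of `K`-invariant vectors of a unitary representation. -/
def fixedSubU {G : Type*} [Group G] [TopologicalSpace G] (π : UnitaryRep G)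
    (K : Subgroup G) : Submodule ℂ π.carrier where
  carrier := {v | ∀ k ∈ K, π.ρ k v = v}
  add_mem' := by
    intro a b ha hb k hk
    simp [map_add, ha k hk, hb k hk]
  zero_mem' := by
    intro k hk
    simp
  smul_mem' := by
    intro c v hv k hk
    simp [_root_.map_smul, hv k hk]

/-!
The closure of a nonzero invariant subspace `W` of smooth vectors is closed and invariant, hence
all of `H`: `W` is dense. A smooth vector `v` is fixed by a compact open subgroup `K` (van Dantzig).
Averaging a vector `w ∈ W` near `v` over its orbit under `K`, which is finite because `w` is smooth,
gives a vector of `W ∩ H^K` at least as close to `v`. So `v` lies in the closure of `W ∩ H^K`,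
which is finite dimensional by admissibility, hence closed: `v ∈ W`.
-/

open Finset

section VanDantzig

open scoped Pointwise

theorem exists_isClopen_isCompact_subset {X : Type*} [TopologicalSpace X] [LocallyCompactSpace X]
    [T2Space X] [TotallyDisconnectedSpace X] {U : Set X} (hU : IsOpen U) {x : X} (hx : x ∈ U) :
    ∃ V : Set X, IsClopen V ∧ IsCompact V ∧ x ∈ V ∧ V ⊆ U := by
  obtain ⟨s, hs, hxs, hsU⟩ := exists_compact_subset hU hx
  obtain ⟨V, hVclopen, hxV, hVs⟩ :=
    loc_compact_Haus_tot_disc_of_zero_dim.mem_nhds_iff.1 (isOpen_interior.mem_nhds hxs)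
  exact ⟨V, hVclopen, hs.of_isClosed_subset hVclopen.isClosed (hVs.trans interior_subset), hxV,
    (hVs.trans interior_subset).trans hsU⟩

/-- The subgroup is the stabilizer of `V` under left translation; it is open because, by
compactness of `V`, some neighbourhood `T` of `1` satisfies `T * V ⊆ V`. -/
theorem exists_isOpen_isCompact_subgroup_subset_s4 {G : Type*} [Group G] [TopologicalSpace G]
    [IsTopologicalGroup G] {V : Set G} (hVopen : IsOpen V) (hVcompact : IsCompact V)
    (h1 : (1 : G) ∈ V) :
    ∃ K : Subgroup G, IsOpen (K : Set G) ∧ IsCompact (K : Set G) ∧ (K : Set G) ⊆ V := by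
  let K := MulAction.stabilizer G V
  have hKV : (K : Set G) ⊆ V := fun g hg => by
    simpa [MulAction.mem_stabilizer_iff.1 hg] using Set.smul_mem_smul_set (a := g) h1
  obtain ⟨T, hT, hTV⟩ := compact_open_separated_mul_left hVcompact hVopen subset_rfl
  have hK : (K : Set G) ∈ nhds (1 : G) := by
    refine Filter.mem_of_superset (Filter.inter_mem hT (inv_mem_nhds_one G hT)) ?_
    rintro t ⟨htT, htT'⟩
    refine MulAction.mem_stabilizer_iff.2 (subset_antisymm ?_ ?_)
    · exact (Set.smul_set_subset_mul htT).trans hTV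
    · exact Set.subset_smul_set_iff.2 ((Set.smul_set_subset_mul (a := t⁻¹) htT').trans hTV)
  have hKopen : IsOpen (K : Set G) := K.isOpen_of_mem_nhds hK
  exact ⟨K, hKopen, hVcompact.of_isClosed_subset (K.isClosed_of_isOpen hKopen) hKV, hKV⟩

/-- van Dantzig's theorem. -/
theorem exists_isOpen_isCompact_subgroup_subset_of_isOpen {G : Type*} [Group G]
    [TopologicalSpace G] [IsTopologicalGroup G] [LocallyCompactSpace G]
    [TotallyDisconnectedSpace G] {U : Set G} (hU : IsOpen U) (h1 : (1 : G) ∈ U) :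
    ∃ K : Subgroup G, IsOpen (K : Set G) ∧ IsCompact (K : Set G) ∧ (K : Set G) ⊆ U := by
  have : T2Space G := IsTopologicalGroup.t2Space_iff_one_closed.2 isClosed_singleton
  obtain ⟨V, hVclopen, hVcompact, h1V, hVU⟩ := exists_isClopen_isCompact_subset hU h1
  obtain ⟨K, hKopen, hKcompact, hKV⟩ :=
    exists_isOpen_isCompact_subgroup_subset_s4 hVclopen.isOpen hVcompact h1V
  exact ⟨K, hKopen, hKcompact, hKV.trans hVU⟩

end VanDantzig

section Average

variable {𝕜 E : Type*}

theorem norm_inv_card_smul_sum_sub_le [RCLike 𝕜] [SeminormedAddCommGroup E] [NormedSpace 𝕜 E]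
    {s : Finset E} (hs : s.Nonempty) {v : E} {r : ℝ} (h : ∀ x ∈ s, ‖x - v‖ ≤ r) :
    ‖(#s : 𝕜)⁻¹ • ∑ x ∈ s, x - v‖ ≤ r := by
  have hcard : (#s : ℝ) ≠ 0 := Nat.cast_ne_zero.2 hs.card_ne_zero
  have hsub : (#s : 𝕜)⁻¹ • ∑ x ∈ s, x - v = (#s : 𝕜)⁻¹ • ∑ x ∈ s, (x - v) := by
    rw [sum_sub_distrib, sum_const, smul_sub, ← Nat.cast_smul_eq_nsmul 𝕜, inv_smul_smul₀]
    exact_mod_cast hcard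
  calc ‖(#s : 𝕜)⁻¹ • ∑ x ∈ s, x - v‖ = (#s : ℝ)⁻¹ * ‖∑ x ∈ s, (x - v)‖ := by
        rw [hsub, norm_smul, norm_inv, RCLike.norm_natCast]
    _ ≤ (#s : ℝ)⁻¹ * (#s * r) := by
        gcongr
        exact (norm_sum_le _ _).trans (by simpa using sum_le_sum h)
    _ = r := by field_simp

theorem map_inv_card_smul_sum_of_mapsTo [DivisionSemiring 𝕜] [AddCommMonoid E] [Module 𝕜 E]
    [DecidableEq E] (T : E →ₗ[𝕜] E) (hT : Function.Injective T) {s : Finset E}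
    (hs : Set.MapsTo T s s) :
    T ((#s : 𝕜)⁻¹ • ∑ x ∈ s, x) = (#s : 𝕜)⁻¹ • ∑ x ∈ s, x := by
  have himage : s.image T = s :=
    eq_of_subset_of_card_le (image_subset_iff.2 hs) (card_image_of_injective s hT).ge
  rw [map_smul, map_sum]
  congr 1
  calc ∑ x ∈ s, T x = ∑ x ∈ s.image T, x := (sum_image (f := fun x => x) hT.injOn).symm
    _ = ∑ x ∈ s, x := by rw [himage]

end Average

namespace UnitaryRep

variable {G : Type*} [Group G] [TopologicalSpace G] (π : UnitaryRep G)

theorem isLocallyConstant_orbit [ContinuousMul G] {w : π.carrier}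
    (hw : IsOpen {g : G | π.ρ g w = w}) : IsLocallyConstant fun g => π.ρ g w := by
  refine (IsLocallyConstant.iff_eventually_eq _).2 fun g => ?_
  have hlim : Filter.Tendsto (fun y => g⁻¹ * y) (nhds g) (nhds 1) :=
    (continuous_const.mul continuous_id).tendsto' g 1 (inv_mul_cancel g)
  filter_upwards [hlim (hw.mem_nhds (π.map_one' w))] with y hy
  have : y = g * (g⁻¹ * y) := (mul_inv_cancel_left g y).symm
  rw [this, π.map_mul', hy]

theorem finite_orbit_of_isCompact [ContinuousMul G] {w : π.carrier}
    (hw : IsOpen {g : G | π.ρ g w = w}) {K : Set G} (hK : IsCompact K) :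
    ((fun g => π.ρ g w) '' K).Finite := by
  have : CompactSpace K := isCompact_iff_compactSpace.1 hK
  rw [Set.image_eq_range]
  exact ((π.isLocallyConstant_orbit hw).comp_continuous continuous_subtype_val).range_finite

theorem exists_mem_inf_fixedSubU_norm_sub_le [ContinuousMul G] {K : Subgroup G}
    (hK : IsCompact (K : Set G)) {W : Submodule ℂ π.carrier}
    (hWinv : ∀ g : G, ∀ w ∈ W, π.ρ g w ∈ W) {w : π.carrier} (hwW : w ∈ W)
    (hw : IsOpen {g : G | π.ρ g w = w}) {v : π.carrier} (hv : v ∈ fixedSubU π K) :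
    ∃ u ∈ W ⊓ fixedSubU π K, ‖u - v‖ ≤ ‖w - v‖ := by
  classical
  set s := (π.finite_orbit_of_isCompact hw hK).toFinset
  have hmem : ∀ {x}, x ∈ s ↔ ∃ k ∈ K, π.ρ k w = x := by
    simp [s]
  refine ⟨(#s : ℂ)⁻¹ • ∑ x ∈ s, x, ⟨?_, fun k hk => ?_⟩, ?_⟩
  · refine W.smul_mem _ (W.sum_mem fun x hx => ?_)
    obtain ⟨k, -, rfl⟩ := hmem.1 hx
    exact hWinv k w hwW
  · refine map_inv_card_smul_sum_of_mapsTo (π.ρ k).toLinearEquiv.toLinearMap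
      (π.ρ k).injective fun x hx => ?_
    obtain ⟨k', hk', rfl⟩ := hmem.1 hx
    exact hmem.2 ⟨k * k', K.mul_mem hk hk', π.map_mul' k k' w⟩
  · refine norm_inv_card_smul_sum_sub_le ⟨w, hmem.2 ⟨1, K.one_mem, π.map_one' w⟩⟩ fun x hx => ?_
    obtain ⟨k, hk, rfl⟩ := hmem.1 hx
    rw [← (π.ρ k).norm_map (w - v), map_sub, hv k hk]

theorem dense_of_isIrreducible (hirr : π.IsIrreducible) {W : Submodule ℂ π.carrier}
    (hWinv : ∀ g : G, ∀ w ∈ W, π.ρ g w ∈ W) (hW : W ≠ ⊥) : Dense (W : Set π.carrier) := by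
  have hclosure_inv : ∀ g : G, ∀ w ∈ W.topologicalClosure, π.ρ g w ∈ W.topologicalClosure :=
    fun g w hw => closure_mono (Set.image_subset_iff.2 fun x hx => hWinv g x hx)
      (map_mem_closure (π.ρ g).continuous hw (Set.mapsTo_image _ _))
  rcases hirr.2 _ W.isClosed_topologicalClosure hclosure_inv with h | h
  · exact absurd (le_bot_iff.1 (h ▸ W.le_topologicalClosure)) hW
  · exact W.dense_iff_topologicalClosure_eq_top.2 h

theorem fixedSubU_le_of_dense [ContinuousMul G] {K : Subgroup G} (hK : IsCompact (K : Set G))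
    [FiniteDimensional ℂ (fixedSubU π K)] {W : Submodule ℂ π.carrier}
    (hWsmooth : (W : Set π.carrier) ⊆ {v : π.carrier | IsOpen {g : G | π.ρ g v = v}})
    (hWinv : ∀ g : G, ∀ w ∈ W, π.ρ g w ∈ W) (hWdense : Dense (W : Set π.carrier)) :
    fixedSubU π K ≤ W := by
  intro v hv
  have : FiniteDimensional ℂ ↥(W ⊓ fixedSubU π K) :=
    Submodule.finiteDimensional_of_le inf_le_right
  suffices v ∈ closure ((W ⊓ fixedSubU π K : Submodule ℂ π.carrier) : Set π.carrier) by
    rw [(Submodule.closed_of_finiteDimensional _).closure_eq] at this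
    exact this.1
  refine Metric.mem_closure_iff.2 fun ε hε => ?_
  obtain ⟨w, hwW, hwv⟩ := Metric.mem_closure_iff.1 (hWdense v) ε hε
  obtain ⟨u, hu, huv⟩ := π.exists_mem_inf_fixedSubU_norm_sub_le hK hWinv hwW (hWsmooth hwW) hv
  refine ⟨u, hu, ?_⟩
  rw [dist_comm, dist_eq_norm] at hwv ⊢
  exact huv.trans_lt hwv

end UnitaryRep

/-- An admissible, topologically irreducible unitary representation
of a tdlc group has algebraically irreducible underlying smooth representation. -/
theorem admissible_irreducible_smooth_part_irreducible {G : Type*} [Group G]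
    [TopologicalSpace G] [IsTopologicalGroup G] [LocallyCompactSpace G]
    [TotallyDisconnectedSpace G]
    (π : UnitaryRep G)
    (hadm : ∀ K : Subgroup G, IsOpen (K : Set G) → IsCompact (K : Set G) →
      FiniteDimensional ℂ (fixedSubU π K))
    (hirr : π.IsIrreducible) :
    ∀ W : Submodule ℂ π.carrier,
      (W : Set π.carrier) ⊆ {v : π.carrier | IsOpen {g : G | π.ρ g v = v}} →
      (∀ g : G, ∀ v ∈ W, π.ρ g v ∈ W) →
      W = ⊥ ∨ (W : Set π.carrier) = {v : π.carrier | IsOpen {g : G | π.ρ g v = v}} := by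
  intro W hWsmooth hWinv
  refine or_iff_not_imp_left.2 fun hW => subset_antisymm hWsmooth fun v hv => ?_
  obtain ⟨K, hKopen, hKcompact, hKv⟩ :=
    exists_isOpen_isCompact_subgroup_subset_of_isOpen hv (π.map_one' v)
  have := hadm K hKopen hKcompact
  exact π.fixedSubU_le_of_dense hKcompact hWsmooth hWinv (π.dense_of_isIrreducible hirr hWinv hW)
    hKv
end

section
/- Let G be a locally compact group and G⁺ ≤ G an open normal subgroup of finite index, and let π be a unitary representation of G with 1 ≺ π|_{G⁺}. Then there exists a unitary representation ρ of G (namely ρ = L²(G/G⁺)) such that 1 ≺ π ⊗ ρ. -/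
open scoped ComplexInnerProductSpace

open MeasureTheory

/-!
Realize `π ⊗ ℓ²(X)`, for a finite discrete `G`-set `X`, on `X`-indexed tuples of vectors of `π`,
`g` acting by `π(g)` entrywise while permuting the entries. If `X` is transitive with point
stabilizer `N` and `s x • x₀ = x`, the coefficient at `g` of the tuples `(π(s x) a)ₓ` and
`(π(s x) b)ₓ` is the sum over `x` of the coefficients of `π|_N` at `(s x)⁻¹ g s (g⁻¹ x) ∈ N`, and
these points stay in a compact subset of `N` while `g` stays in a compact subset of `G`. Averaging
over `x` an approximation of `1` by coefficients of `π|_N` thus approximates `1` by coefficients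
of `π ⊗ ℓ²(X)`.
-/

namespace UnitaryRep

variable {G : Type*} [Group G] [TopologicalSpace G]

lemma trivialRep_ρ_apply (g : G) (w : (trivialRep G).carrier) : (trivialRep G).ρ g w = w := rfl

lemma inner_ρ_ρ (π : UnitaryRep G) (g h : G) (w w' : π.carrier) :
    ⟪π.ρ g w, π.ρ h w'⟫ = π.mc w w' (h⁻¹ * g) := by
  conv_lhs => rw [← mul_inv_cancel_left h g, π.map_mul']
  exact (π.ρ h).inner_map_map _ _

lemma mc_smul_right (π : UnitaryRep G) (a b : π.carrier) (c : ℂ) (g : G) :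
    π.mc a (c • b) g = c * π.mc a b g :=
  inner_smul_right _ _ _

lemma trivialRep_weakContained_iff {σ : UnitaryRep G} :
    (trivialRep G).WeakContained σ ↔ ∀ C : Set G, IsCompact C → ∀ ε > (0 : ℝ),
      ∃ (n : ℕ) (a b : Fin n → σ.carrier), ∀ g ∈ C, ‖1 - ∑ i, σ.mc (a i) (b i) g‖ ≤ ε := by
  refine ⟨fun h C hC ε hε => ?_, fun h u v C hC ε hε => ?_⟩
  · have hone (g : G) : (trivialRep G).mc (1 : ℂ) (1 : ℂ) g = 1 := by
      change ⟪(1 : ℂ), (1 : ℂ)⟫ = 1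
      simp
    simpa only [hone] using h (1 : ℂ) (1 : ℂ) C hC ε hε
  · set c : ℂ := ⟪u, v⟫
    obtain ⟨n, a, b, hab⟩ := h C hC (ε / (‖c‖ + 1)) (by positivity)
    refine ⟨n, a, fun i => c • b i, fun g hg => ?_⟩
    calc ‖(trivialRep G).mc u v g - ∑ i, σ.mc (a i) (c • b i) g‖
        = ‖c‖ * ‖1 - ∑ i, σ.mc (a i) (b i) g‖ := by
          simp only [mc_smul_right, ← Finset.mul_sum, ← norm_mul, mul_sub, mul_one]
          rfl
      _ ≤ ‖c‖ * (ε / (‖c‖ + 1)) := by gcongr; exact hab g hg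
      _ ≤ ε := by
          rw [mul_div_assoc', div_le_iff₀ (by positivity)]
          nlinarith [norm_nonneg c]

section tensorPerm

variable [IsTopologicalGroup G] (π : UnitaryRep G) (X : Type) [Fintype X] [MulAction G X]
  [TopologicalSpace X] [DiscreteTopology X] [ContinuousSMul G X]

/-- `π ⊗ ℓ²(X)`, acting by `(g • w) x = π(g) (w (g⁻¹ • x))`; `ℓ²(X)` itself is
`(trivialRep G).tensorPerm X`. An `abbrev`, so that elements of the carrier are seen as
functions on `X`. -/
noncomputable abbrev tensorPerm : UnitaryRep G where
  carrier := PiLp 2 fun _ : X => π.carrier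
  ρ g := (LinearIsometryEquiv.piLpCongrLeft 2 ℂ π.carrier (MulAction.toPerm g)).trans
    (LinearIsometryEquiv.piLpCongrRight 2 fun _ => π.ρ g)
  map_one' w := by ext x; simp [π.map_one']
  map_mul' g h w := by ext x; simp [π.map_mul', mul_smul]
  continuous_orbit w := by
    refine PiLp.continuous_toLp _ _ |>.comp <| continuous_pi fun x => ?_
    refine continuous_iff_continuousAt.2 fun g₀ => ?_
    have hloc : ∀ᶠ g in nhds g₀, g⁻¹ • x = g₀⁻¹ • x := by
      have := (continuous_inv.smul continuous_const : Continuous fun g : G => g⁻¹ • x).tendsto g₀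
      rwa [nhds_discrete X, Filter.tendsto_pure] at this
    refine (π.continuous_orbit (w (g₀⁻¹ • x))).continuousAt.congr ?_
    filter_upwards [hloc] with g hg
    simp [hg]

lemma isTensorRep_tensorPerm :
    IsTensorRep π ((trivialRep G).tensorPerm X) (π.tensorPerm X) := by
  classical
  refine ⟨fun u (v : PiLp 2 fun _ : X => ℂ) => WithLp.toLp 2 fun x => v x • u, ?_, ?_, ?_⟩
  · intro u (v : PiLp 2 fun _ : X => ℂ) u' (v' : PiLp 2 fun _ : X => ℂ)
    show ∑ x, ⟪v x • u, v' x • u'⟫ = ⟪u, u'⟫ * ∑ x, ⟪v x, v' x⟫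
    simp only [inner_smul_left, inner_smul_right, Finset.mul_sum, RCLike.inner_apply]
    exact Finset.sum_congr rfl fun x _ => by ring
  · intro g u v
    ext x
    simp [trivialRep_ρ_apply]
  · refine dense_univ.mono fun F _ => ?_
    let δ (x : X) : PiLp 2 fun _ : X => ℂ := PiLp.single 2 x 1
    have hF : F = ∑ x, WithLp.toLp 2 fun y => δ x y • F x := by
      ext y
      simp [δ, PiLp.single_apply]
    rw [hF]
    exact Submodule.sum_mem _ fun x _ => Submodule.subset_span ⟨F x, δ x, rfl⟩

lemma mc_tensorPerm_toLp (s : X → G) (a b : π.carrier) (c : ℂ) (g : G) :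
    (π.tensorPerm X).mc (WithLp.toLp 2 fun x => π.ρ (s x) a)
        (WithLp.toLp 2 fun x => c • π.ρ (s x) b) g =
      c * ∑ x, π.mc a b ((s x)⁻¹ * g * s (g⁻¹ • x)) := by
  change ∑ x, ⟪π.ρ g (π.ρ (s (g⁻¹ • x)) a), c • π.ρ (s x) b⟫ = _
  rw [Finset.mul_sum]
  refine Finset.sum_congr rfl fun x _ => ?_
  rw [inner_smul_right, ← π.map_mul', inner_ρ_ρ, mul_assoc]

theorem trivialRep_weakContained_tensorPerm [MulAction.IsPretransitive G X] (x₀ : X)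
    (h : (trivialRep (MulAction.stabilizer G x₀)).WeakContained
      (π.res (MulAction.stabilizer G x₀))) :
    (trivialRep G).WeakContained (π.tensorPerm X) := by
  rw [trivialRep_weakContained_iff] at h ⊢
  intro C hC ε hε
  choose s hs using MulAction.exists_smul_eq G x₀
  set H := MulAction.stabilizer G x₀
  have hmem (g : G) (x : X) : (s x)⁻¹ * g * s (g⁻¹ • x) ∈ H := by
    change _ • x₀ = x₀
    simp [mul_smul, hs, inv_smul_eq_iff]
  set K : Set H := (↑) ⁻¹' ⋃ (x) (y), (fun g => (s x)⁻¹ * g * s y) '' C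
  have hK : IsCompact K :=
    (H.isClosed_of_isOpen (stabilizer_isOpen G x₀)).isClosedEmbedding_subtypeVal
      |>.isCompact_preimage (isCompact_iUnion fun x => isCompact_iUnion fun y =>
        hC.image (by fun_prop))
  obtain ⟨n, a, b, hab⟩ := h K hK ε hε
  refine ⟨n, fun i => WithLp.toLp 2 fun x => π.ρ (s x) (a i),
    fun i => WithLp.toLp 2 fun x => (Fintype.card X : ℂ)⁻¹ • π.ρ (s x) (b i), fun g hg => ?_⟩
  have hclose (x : X) :
      ∑ i, π.mc (a i) (b i) ((s x)⁻¹ * g * s (g⁻¹ • x)) ∈ Metric.closedBall 1 ε := by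
    rw [Metric.mem_closedBall', Complex.dist_eq]
    exact hab ⟨_, hmem g x⟩ (Set.mem_iUnion₂.2 ⟨x, g⁻¹ • x, g, hg, rfl⟩)
  have hcard : (0 : ℝ) < Fintype.card X := Nat.cast_pos.2 (Fintype.card_pos_iff.2 ⟨x₀⟩)
  have havg := (convex_closedBall (1 : ℂ) ε).sum_mem (t := Finset.univ)
    (w := fun _ => (Fintype.card X : ℝ)⁻¹) (fun _ _ => by positivity)
    (by simp [hcard.ne']) (fun x _ => hclose x)
  rw [Metric.mem_closedBall', Complex.dist_eq] at havg
  convert havg using 3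
  dsimp only
  rw [Finset.sum_congr rfl fun i _ => mc_tensorPerm_toLp π X s (a i) (b i) _ g]
  simp only [Complex.real_smul, Complex.ofReal_inv, Complex.ofReal_natCast, Finset.mul_sum]
  exact Finset.sum_comm

end tensorPerm

end UnitaryRep

/-- Carriers of unitary representations live in `Type`, so the coset space `G ⧸ N` is replaced
by a copy of it on `Fin k`. -/
theorem Subgroup.exists_transitive_fin_action_stabilizer_eq {G : Type*} [Group G]
    [TopologicalSpace G] [IsTopologicalGroup G] (N : Subgroup G) [N.FiniteIndex]
    (hN : IsOpen (N : Set G)) :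
    ∃ (k : ℕ) (_ : MulAction G (Fin k)), ContinuousSMul G (Fin k) ∧
      MulAction.IsPretransitive G (Fin k) ∧ ∃ x₀ : Fin k, MulAction.stabilizer G x₀ = N := by
  obtain ⟨k, ⟨e⟩⟩ := Finite.exists_equiv_fin (G ⧸ N)
  let := e.symm.mulAction G
  have := QuotientGroup.discreteTopology hN
  have hstab (j : Fin k) : MulAction.stabilizer G j = MulAction.stabilizer G (e.symm j) := by
    ext g
    simp [MulAction.mem_stabilizer_iff, Equiv.smul_def, ← Equiv.eq_symm_apply]
  refine ⟨k, _, continuousSMul_iff_stabilizer_isOpen.2 fun j => hstab j ▸ stabilizer_isOpen G _,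
    ⟨fun i j => ?_⟩, e (1 : G), by rw [hstab, e.symm_apply_apply, MulAction.stabilizer_quotient]⟩
  obtain ⟨g, hg⟩ := MulAction.exists_smul_eq G (e.symm i) (e.symm j)
  exact ⟨g, by simp [Equiv.smul_def, hg]⟩

open UnitaryRep in
theorem finite_index_no_absorption_general {G : Type*} [Group G] [TopologicalSpace G]
    [IsTopologicalGroup G]
    (N : Subgroup G) (hopen : IsOpen (N : Set G)) [N.FiniteIndex]
    (π : UnitaryRep G)
    (h : (trivialRep N).WeakContained (π.res N)) :
    ∃ ρ t : UnitaryRep G, IsTensorRep π ρ t ∧ (trivialRep G).WeakContained t := by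
  obtain ⟨k, _, _, _, x₀, rfl⟩ := N.exists_transitive_fin_action_stabilizer_eq hopen
  exact ⟨_, _, isTensorRep_tensorPerm π (Fin k),
    trivialRep_weakContained_tensorPerm π (Fin k) x₀ h⟩

open UnitaryRep in
/-- If `G⁺` is an open normal finite index subgroup and
`1 ≺ π|_{G⁺}`, then there is a unitary representation `ρ` of `G` (namely
`L²(G/G⁺)`) with `1 ≺ π ⊗ ρ`. -/
theorem finite_index_no_absorption {G : Type*} [Group G] [TopologicalSpace G]
    [IsTopologicalGroup G] [LocallyCompactSpace G]
    (N : Subgroup G) [N.Normal] (hopen : IsOpen (N : Set G)) [N.FiniteIndex]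
    (π : UnitaryRep G)
    (h : (trivialRep N).WeakContained (π.res N)) :
    ∃ ρ t : UnitaryRep G, IsTensorRep π ρ t ∧ (trivialRep G).WeakContained t :=
  finite_index_no_absorption_general N hopen π h
end
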